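/- The family of sesquilinear forms ^{(∞)}U_M(m,n) = e^{2πi(m+1/2)/M} δ_{mn} sin(π/M)/(π/M) on ℂ^M is weakly cylindrically consistent with respect to the embedding I^{(2)}_{M→2M} e_M^m = (e_{2M}^{2m} + e_{2M}^{2m+1})/√2: one has (1/2)[^{(∞)}U_{2M}(2m,2n) + ^{(∞)}U_{2M}(2m+1,2n) + ^{(∞)}U_{2M}(2m,2n+1) + ^{(∞)}U_{2M}(2m+1,2n+1)] = ^{(∞)}U_M(m,n). -/

import Mathlib

/-! Halving the mesh splits the phase `e^{2πi(m+1/2)/M}` into the two phases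
`e^{2πi(m+1/2)/M ∓ iπ/(2M)}`, whose sum is `2 cos(π/(2M)) e^{2πi(m+1/2)/M}`; the factor
`cos(π/(2M))` is exactly what turns `sinc(π/(2M))` into `sinc(π/M)`, by `sin 2t = 2 sin t cos t`. -/

/-- The RG fixed-point kernel ^{(∞)}U_M(m,n) = e^{2πi(m+1/2)/M} δ_{mn} · sin(π/M)/(π/M). -/
noncomputable def Ukernel (M m n : ℕ) : ℂ :=
  (if m = n then 1 else 0) *
    Complex.exp (2 * Real.pi * Complex.I * ((m : ℂ) + 1 / 2) / M) *
    ((Real.sin (Real.pi / M) / (Real.pi / M) : ℝ) : ℂ)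

open Complex in
theorem Complex.exp_sub_mul_I_add_exp_add_mul_I (w θ : ℂ) :
    exp (w - θ * I) + exp (w + θ * I) = 2 * cos θ * exp w := by
  rw [two_cos, sub_eq_add_neg, exp_add, exp_add, neg_mul_eq_neg_mul]
  ring

theorem Real.cos_mul_sin_div_self (t : ℝ) :
    cos t * (sin t / t) = sin (2 * t) / (2 * t) := by
  rw [sin_two_mul, mul_assoc, mul_div_mul_left _ _ two_ne_zero]
  ring

theorem Ukernel_of_ne {M m n : ℕ} (h : m ≠ n) : Ukernel M m n = 0 := by
  simp [Ukernel, h]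

theorem Ukernel_self (M m : ℕ) :
    Ukernel M m m = Complex.exp (2 * Real.pi * Complex.I * ((m : ℂ) + 1 / 2) / M) *
      ((Real.sin (Real.pi / M) / (Real.pi / M) : ℝ) : ℂ) := by
  simp [Ukernel]

theorem Ukernel_two_mul_add_Ukernel_two_mul_add_one (M m : ℕ) :
    Ukernel (2 * M) (2 * m) (2 * m) + Ukernel (2 * M) (2 * m + 1) (2 * m + 1) =
      2 * Ukernel M m m := by
  set θ : ℝ := Real.pi / (2 * M)
  set w : ℂ := 2 * Real.pi * Complex.I * ((m : ℂ) + 1 / 2) / M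
  have phase_even : 2 * Real.pi * Complex.I * (((2 * m : ℕ) : ℂ) + 1 / 2) / ((2 * M : ℕ) : ℂ) =
      w - θ * Complex.I := by
    simp only [w, θ]; push_cast; ring
  have phase_odd : 2 * Real.pi * Complex.I * (((2 * m + 1 : ℕ) : ℂ) + 1 / 2) /
      ((2 * M : ℕ) : ℂ) = w + θ * Complex.I := by
    simp only [w, θ]; push_cast; ring
  have angle_fine : Real.pi / ((2 * M : ℕ) : ℝ) = θ := by push_cast; rfl
  have angle_coarse : Real.pi / (M : ℝ) = 2 * θ := by simp only [θ]; ring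
  rw [Ukernel_self, Ukernel_self, Ukernel_self, phase_even, phase_odd, angle_fine,
    angle_coarse, ← add_mul, Complex.exp_sub_mul_I_add_exp_add_mul_I,
    ← Real.cos_mul_sin_div_self]
  push_cast
  ring

theorem stmt12_general (M : ℕ) (m n : ℕ) :
    (1 / 2 : ℂ) *
        (Ukernel (2 * M) (2 * m) (2 * n) + Ukernel (2 * M) (2 * m + 1) (2 * n) +
          Ukernel (2 * M) (2 * m) (2 * n + 1) + Ukernel (2 * M) (2 * m + 1) (2 * n + 1)) =
      Ukernel M m n := by
  rcases eq_or_ne m n with rfl | hmn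
  · rw [Ukernel_of_ne (by omega : 2 * m + 1 ≠ 2 * m), Ukernel_of_ne (by omega : 2 * m ≠ 2 * m + 1),
      add_zero, add_zero, Ukernel_two_mul_add_Ukernel_two_mul_add_one]
    ring
  · rw [Ukernel_of_ne hmn, Ukernel_of_ne (by omega), Ukernel_of_ne (by omega),
      Ukernel_of_ne (by omega), Ukernel_of_ne (by omega)]
    ring

/-- The family of fixed-point kernels ^{(∞)}U_M is weakly
cylindrically consistent with respect to I^{(2)}_{M→2M}:
(1/2)[^{(∞)}U_{2M}(2m,2n) + ^{(∞)}U_{2M}(2m+1,2n) + ^{(∞)}U_{2M}(2m,2n+1)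
  + ^{(∞)}U_{2M}(2m+1,2n+1)] = ^{(∞)}U_M(m,n). -/
theorem stmt12 (M : ℕ) (L : ℕ) (hM : M = 2 ^ L) (m n : ℕ) (hm : m < M) (hn : n < M) :
    (1 / 2 : ℂ) *
        (Ukernel (2 * M) (2 * m) (2 * n) + Ukernel (2 * M) (2 * m + 1) (2 * n) +
          Ukernel (2 * M) (2 * m) (2 * n + 1) + Ukernel (2 * M) (2 * m + 1) (2 * n + 1)) =
      Ukernel M m n :=
  stmt12_general M m n
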